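/- arXiv:1511.01995 — 5 statements merged into one kernel-verified Lean document; each statement's English description precedes it below -/
import Mathlib

section
/- Let μ > 0 and T₀ > 0. Then sup_{0 < T ≤ T₀} ∫_{ℝ³} |1/K_T(p) − 1/|p|²| · ( | |p| − √μ | / ( |p| + √μ ) ) dp < ∞. -/
open MeasureTheory Real Filter Metric
open scoped Topology ENNReal ComplexOrder

noncomputable section

/-- Euclidean space ℝ³. -/
abbrev E3 := EuclideanSpace ℝ (Fin 3)

namespace BCS

/-- The normalization constant `(2π)^{-3/2}`. -/
def c3 : ℝ := (2 * Real.pi) ^ (-(3:ℝ)/2)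

/-- Fourier-type transform with kernel `e^{-ip·x}`:
`(ft f) p = (2π)^{-3/2} ∫ f(x) e^{-ip·x} dx`.  With the conventions of the paper this
is used both for the Fourier transform `f ↦ f̂` and for the map `α̂ ↦ α`. -/
def ft (f : E3 → ℂ) (p : E3) : ℂ :=
  (c3 : ℂ) * ∫ x : E3, f x * Complex.exp (-Complex.I * ((inner ℝ x p : ℝ) : ℂ))

/-- Fourier transform of a real-valued potential. -/
def cft (V : E3 → ℝ) (p : E3) : ℂ := ft (fun x => (V x : ℂ)) p

/-- The dispersion relation `K_T(p) = (|p|²-μ)/tanh((|p|²-μ)/(2T))`, extended by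
continuity to the value `2T` on the Fermi sphere `|p|² = μ`. -/
def KT (μ T : ℝ) (p : E3) : ℝ :=
  if ‖p‖^2 = μ then 2*T else (‖p‖^2 - μ) / Real.tanh ((‖p‖^2 - μ)/(2*T))

/-- `E_Δ(p) = √((|p|²-μ)² + |Δ(p)|²)`. -/
def EDelta (μ : ℝ) (Δ : E3 → ℂ) (p : E3) : ℝ :=
  Real.sqrt ((‖p‖^2 - μ)^2 + ‖Δ p‖^2)

/-- `K_T^Δ(p) = E_Δ(p)/tanh(E_Δ(p)/(2T))`, equal to `2T` when `E_Δ(p) = 0`. -/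
def KTDelta (μ T : ℝ) (Δ : E3 → ℂ) (p : E3) : ℝ :=
  if EDelta μ Δ p = 0 then 2*T
  else EDelta μ Δ p / Real.tanh (EDelta μ Δ p / (2*T))

/-- `x log x`, with the convention `0 · log 0 = 0` (note `Real.log 0 = 0`). -/
def xlogx (x : ℝ) : ℝ := x * Real.log x

/-- `Tr_{ℂ²}[Γ(p) ln Γ(p)]` for the 2×2 hermitian matrix `Γ(p)` with entries
`γ₁, a; conj a, 1-γ₂`, computed through its two (real) eigenvalues
`(t ± √(t² - 4d))/2`, where `t` is the trace and `d` the determinant. -/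
def entDens (γ₁ γ₂ : ℝ) (a : ℂ) : ℝ :=
  xlogx ((γ₁ + (1 - γ₂) + Real.sqrt ((γ₁ + (1 - γ₂))^2 - 4*(γ₁ * (1 - γ₂) - ‖a‖^2)))/2) +
  xlogx ((γ₁ + (1 - γ₂) - Real.sqrt ((γ₁ + (1 - γ₂))^2 - 4*(γ₁ * (1 - γ₂) - ‖a‖^2)))/2)

/-- The 2×2 matrix `Γ(p)` built from `γ̂` and `α̂`. -/
def bcsMatrix (γ : E3 → ℝ) (α : E3 → ℂ) (p : E3) : Matrix (Fin 2) (Fin 2) ℂ :=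
  !![(γ p : ℂ), α p; (starRingEnd ℂ) (α p), 1 - (γ (-p) : ℂ)]

/-- The set `D` of translation-invariant BCS states `(γ̂, α̂)`. -/
def memD (γ : E3 → ℝ) (α : E3 → ℂ) : Prop :=
  Measurable γ ∧ Measurable α ∧
  Integrable (fun p : E3 => (1 + ‖p‖^2) * γ p) ∧
  Integrable (fun p : E3 => (1 + ‖p‖^2) * ‖α p‖^2) ∧
  (∀ᵐ p : E3, α (-p) = α p) ∧
  (∀ᵐ p : E3, (bcsMatrix γ α p).PosSemidef ∧ (1 - bcsMatrix γ α p).PosSemidef)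

/-- The entropy `S(Γ) = -∫ Tr_{ℂ²}[Γ(p) ln Γ(p)] dp`. -/
def entropy (γ : E3 → ℝ) (α : E3 → ℂ) : ℝ :=
  - ∫ p : E3, entDens (γ p) (γ (-p)) (α p)

/-- The translation-invariant BCS functional
`F(γ̂,α̂) = ∫ (|p|²-μ) γ̂(p) dp + ∫ V(x)|α(x)|² dx - T S(Γ)`. -/
def bcsF (μ T : ℝ) (V : E3 → ℝ) (γ : E3 → ℝ) (α : E3 → ℂ) : ℝ :=
  (∫ p : E3, (‖p‖^2 - μ) * γ p) + (∫ x : E3, V x * ‖ft α x‖^2) - T * entropy γ α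

/-- `Δ(p) = 2 (2π)^{-3/2} ∫ V(x) α(x) e^{-ip·x} dx`, where `α = ft α̂`. -/
def Delta (V : E3 → ℝ) (α : E3 → ℂ) (p : E3) : ℂ :=
  2 * ft (fun x => (V x : ℂ) * ft α x) p

/-- Membership of `φ̂` in (the Fourier picture of) `H¹(ℝ³)`. -/
def memH1F (φ : E3 → ℂ) : Prop :=
  Measurable φ ∧ Integrable (fun p : E3 => (1 + ‖p‖^2) * ‖φ p‖^2)

/-- The set of temperatures at which the normal state is stable:
`K_T + V ≥ 0` as a quadratic form on `H¹`. -/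
def TcSet (μ : ℝ) (V : E3 → ℝ) : Set ℝ :=
  {T : ℝ | 0 < T ∧ ∀ φ : E3 → ℂ, memH1F φ →
    0 ≤ (∫ p : E3, KT μ T p * ‖φ p‖^2) + ∫ x : E3, V x * ‖ft φ x‖^2}

/-- The BCS critical temperature `T_c(V)` at chemical potential `μ`. -/
def Tc (μ : ℝ) (V : E3 → ℝ) : ℝ := sInf (TcSet μ V)

/-- The surface measure `dω` on the unit sphere `S² ⊂ ℝ³`. -/
def ω : Measure (sphere (0 : E3) 1) := (volume : Measure E3).toSphere

/-- The quadratic form `(2π)^{-3/2} ∬_{S²×S²} V̂(√μ(p-q)) conj(u(p)) u(q) dω(p) dω(q)`. -/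
def sphereForm (μ : ℝ) (V : E3 → ℝ) (u : sphere (0 : E3) 1 → ℂ) : ℝ :=
  ((c3 : ℂ) * ∫ p, ∫ q, cft V (Real.sqrt μ • ((p : E3) - (q : E3))) *
    (starRingEnd ℂ) (u p) * u q ∂ω ∂ω).re

/-- `e_μ(V)`: the infimum of the quadratic form of `𝒱_μ` over normalized `u ∈ L²(S²)`. -/
def emu (μ : ℝ) (V : E3 → ℝ) : ℝ :=
  sInf { r : ℝ | ∃ u : sphere (0 : E3) 1 → ℂ,
    MemLp u 2 ω ∧ (∫ q, ‖u q‖^2 ∂ω) = 1 ∧ r = sphereForm μ V u }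

/-- `m_μ(T) = (1/4π) ∫ (1/K_T(p) - 1/|p|²) dp`. -/
def mmu (μ T : ℝ) : ℝ := (1/(4*Real.pi)) * ∫ p : E3, (1/KT μ T p - 1/‖p‖^2)

/-- The domain of the zero-temperature BCS functional: even `α̂ ∈ H¹` with `|α̂| ≤ 1/2`. -/
def memD0 (α : E3 → ℂ) : Prop :=
  Measurable α ∧ Integrable (fun p : E3 => (1 + ‖p‖^2) * ‖α p‖^2) ∧
  (∀ᵐ p : E3, α (-p) = α p) ∧ (∀ᵐ p : E3, ‖α p‖ ≤ 1/2)

/-- The zero-temperature BCS functional with coupling `λ`. -/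
def F0 (μ lam : ℝ) (V : E3 → ℝ) (α : E3 → ℂ) : ℝ :=
  (1/2) * (∫ p : E3, |‖p‖^2 - μ| * (1 - Real.sqrt (1 - 4*‖α p‖^2)))
  + lam * ∫ x : E3, V x * ‖ft α x‖^2

/-- The energy gap `Ξ = inf_p E_Δ(p)` for `Δ(p) = 2λ(2π)^{-3/2} ∫ V α e^{-ipx} dx`. -/
def gap (μ lam : ℝ) (V : E3 → ℝ) (α : E3 → ℂ) : ℝ :=
  ⨅ p : E3, EDelta μ (fun q => (lam : ℂ) * Delta V α q) p

end BCS

/-! `|x| ≤ x / tanh (x / 2T) ≤ |x| + 2T`, so `|1/K_T - 1/|p|²| ≤ (μ + 2T) / (K_T |p|²)`, while the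
weight `||p| - √μ| / (|p| + √μ) = ||p|² - μ| / (|p| + √μ)²` is at most `K_T / (|p|² + μ)`. Hence the
integrand is bounded, uniformly in `T ≤ T₀`, by `(μ + 2T₀) / (|p|² (|p|² + μ))`, which in polar
coordinates on ℝ³ becomes the integrable `(μ + 2T₀) / (r² + μ)` on `(0, ∞)`. -/

namespace Real

lemma tanh_pos {y : ℝ} (hy : 0 < y) : 0 < tanh y := by
  rw [tanh_eq_sinh_div_cosh]
  exact div_pos (sinh_pos_iff.2 hy) (cosh_pos y)

lemma abs_div_tanh_abs (y : ℝ) : |y| / tanh |y| = y / tanh y := by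
  rcases abs_cases y with ⟨h, -⟩ | ⟨h, -⟩
  · rw [h]
  · rw [h, tanh_neg, neg_div_neg_eq]

lemma self_le_div_tanh {y : ℝ} (hy : 0 ≤ y) : y ≤ y / tanh y := by
  rcases hy.eq_or_lt with rfl | hy
  · simp
  · rw [le_div_iff₀ (tanh_pos hy)]
    exact mul_le_of_le_one_right hy.le (tanh_lt_one y).le

lemma div_tanh_le_self_add_one {y : ℝ} (hy : 0 ≤ y) : y / tanh y ≤ y + 1 := by
  rcases hy.eq_or_lt with rfl | hy
  · simp
  -- after clearing denominators this is `2y + 1 ≤ exp (2y)`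
  rw [div_le_iff₀ (tanh_pos hy), tanh_eq, mul_div_assoc', le_div_iff₀ (by positivity)]
  have hexp : 2 * y + 1 ≤ exp y * exp y := by
    rw [← exp_add, ← two_mul]; exact add_one_le_exp _
  have hinv : exp y * exp (-y) = 1 := by rw [← exp_add, add_neg_cancel, exp_zero]
  nlinarith [exp_pos y, exp_pos (-y)]

lemma abs_le_div_tanh (y : ℝ) : |y| ≤ y / tanh y := by
  rw [← abs_div_tanh_abs]; exact self_le_div_tanh (abs_nonneg y)

lemma div_tanh_le_abs_add_one (y : ℝ) : y / tanh y ≤ |y| + 1 := by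
  rw [← abs_div_tanh_abs]; exact div_tanh_le_self_add_one (abs_nonneg y)

lemma div_tanh_div_eq_mul {c : ℝ} (hc : c ≠ 0) (x : ℝ) :
    x / tanh (x / c) = c * (x / c / tanh (x / c)) := by
  rw [mul_div_assoc', mul_div_cancel₀ _ hc]

lemma abs_le_div_tanh_div {c : ℝ} (hc : 0 < c) (x : ℝ) : |x| ≤ x / tanh (x / c) :=
  calc |x| = c * |x / c| := by rw [abs_div, abs_of_pos hc, mul_div_cancel₀ _ hc.ne']
    _ ≤ c * (x / c / tanh (x / c)) := mul_le_mul_of_nonneg_left (abs_le_div_tanh _) hc.le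
    _ = x / tanh (x / c) := (div_tanh_div_eq_mul hc.ne' x).symm

lemma div_tanh_div_le {c : ℝ} (hc : 0 < c) (x : ℝ) : x / tanh (x / c) ≤ |x| + c := by
  calc x / tanh (x / c) = c * (x / c / tanh (x / c)) := div_tanh_div_eq_mul hc.ne' x
    _ ≤ c * (|x / c| + 1) := mul_le_mul_of_nonneg_left (div_tanh_le_abs_add_one _) hc.le
    _ = |x| + c := by rw [abs_div, abs_of_pos hc]; field_simp

end Real

lemma integrable_inv_sq_add {c : ℝ} (hc : 0 < c) : Integrable fun y : ℝ => (y ^ 2 + c)⁻¹ := by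
  refine (integrable_inv_one_add_sq.const_mul (1 + c⁻¹)).mono' (by fun_prop)
    (ae_of_all _ fun y => ?_)
  rw [norm_of_nonneg (by positivity)]
  field_simp
  nlinarith [sq_nonneg y]

lemma integrable_inv_norm_sq_mul_norm_sq_add {E : Type*} [NormedAddCommGroup E] [NormedSpace ℝ E]
    [FiniteDimensional ℝ E] [MeasurableSpace E] [BorelSpace E] (μ : Measure E) [μ.IsAddHaarMeasure]
    (hE : Module.finrank ℝ E = 3) {c : ℝ} (hc : 0 < c) :
    Integrable (fun x : E => (‖x‖ ^ 2 * (‖x‖ ^ 2 + c))⁻¹) μ := by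
  have : Nontrivial E := Module.nontrivial_of_finrank_pos (R := ℝ) (by omega)
  refine (integrable_fun_norm_addHaar μ (f := fun y => (y ^ 2 * (y ^ 2 + c))⁻¹)).2 ?_
  refine (integrable_inv_sq_add hc).integrableOn.congr_fun (fun y (hy : 0 < y) => ?_)
    measurableSet_Ioi
  rw [hE, smul_eq_mul, mul_inv, ← mul_assoc, show 3 - 1 = 2 from rfl,
    mul_inv_cancel₀ (by positivity), one_mul]

lemma abs_inv_sub_inv_mul_le {a r K t : ℝ} (ha : 0 < a) (hr : 0 < r) (ht : 0 ≤ t)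
    (hK : |a ^ 2 - r ^ 2| ≤ K) (hK' : K ≤ |a ^ 2 - r ^ 2| + t) :
    |1 / K - 1 / a ^ 2| * (|a - r| / (a + r)) ≤ (r ^ 2 + t) / (a ^ 2 * (a ^ 2 + r ^ 2)) := by
  rcases eq_or_ne a r with rfl | hne
  · simp only [sub_self, abs_zero, zero_div, mul_zero]; positivity
  have hd : |a ^ 2 - r ^ 2| = |a - r| * (a + r) := by
    rw [show a ^ 2 - r ^ 2 = (a - r) * (a + r) by ring, abs_mul,
      abs_of_pos (by positivity : 0 < a + r)]
  have hK₀ : 0 < K :=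
    hK.trans_lt' (by rw [hd]; exact mul_pos (abs_pos.2 (sub_ne_zero.2 hne)) (by positivity))
  have hnum : |a ^ 2 - K| ≤ r ^ 2 + t := by
    rw [abs_le]
    constructor <;> cases abs_cases (a ^ 2 - r ^ 2) <;> linarith [sq_nonneg a, sq_nonneg r]
  calc |1 / K - 1 / a ^ 2| * (|a - r| / (a + r))
      = |a ^ 2 - K| * (|a ^ 2 - r ^ 2| / K) / (a ^ 2 * (a + r) ^ 2) := by
        rw [div_sub_div _ _ hK₀.ne' (by positivity), one_mul, mul_one, abs_div,
          abs_of_pos (mul_pos hK₀ (by positivity)), hd]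
        field_simp
    _ ≤ (r ^ 2 + t) * 1 / (a ^ 2 * (a ^ 2 + r ^ 2)) := by
        gcongr
        · exact (div_le_one hK₀).2 hK
        · nlinarith
    _ = (r ^ 2 + t) / (a ^ 2 * (a ^ 2 + r ^ 2)) := by rw [mul_one]

namespace BCS

lemma abs_sub_le_KT {μ T : ℝ} (hT : 0 < T) (p : E3) : |‖p‖ ^ 2 - μ| ≤ KT μ T p := by
  unfold KT
  split_ifs with h
  · rw [h, sub_self, abs_zero]; positivity
  · exact abs_le_div_tanh_div (by positivity) _

lemma KT_le_abs_sub_add {μ T : ℝ} (hT : 0 < T) (p : E3) : KT μ T p ≤ |‖p‖ ^ 2 - μ| + 2 * T := by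
  unfold KT
  split_ifs with h
  · rw [h, sub_self, abs_zero, zero_add]
  · exact div_tanh_div_le (by positivity) _

lemma abs_inv_KT_sub_inv_mul_le {μ T : ℝ} (hμ : 0 < μ) (hT : 0 < T) {p : E3} (hp : p ≠ 0) :
    |1 / KT μ T p - 1 / ‖p‖ ^ 2| * (|‖p‖ - √μ| / (‖p‖ + √μ)) ≤
      (μ + 2 * T) / (‖p‖ ^ 2 * (‖p‖ ^ 2 + μ)) := by
  have hr : √μ ^ 2 = μ := sq_sqrt hμ.le
  have := abs_inv_sub_inv_mul_le (K := KT μ T p) (norm_pos_iff.2 hp) (sqrt_pos.2 hμ)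
    (by positivity : 0 ≤ 2 * T)
    (by rw [hr]; exact abs_sub_le_KT hT p) (by rw [hr]; exact KT_le_abs_sub_add hT p)
  rwa [hr] at this

theorem kernel_uniform_bound_general (μ T₀ : ℝ) (hμ : 0 < μ) :
    ∃ C : ℝ, ∀ T : ℝ, 0 < T → T ≤ T₀ →
      (∫⁻ p : E3, ENNReal.ofReal
          (|1 / KT μ T p - 1 / ‖p‖^2| * (|‖p‖ - Real.sqrt μ| / (‖p‖ + Real.sqrt μ))))
        ≤ ENNReal.ofReal C := by
  refine ⟨∫ p : E3, (μ + 2 * T₀) * (‖p‖ ^ 2 * (‖p‖ ^ 2 + μ))⁻¹, fun T hT hTT => ?_⟩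
  have hC : 0 ≤ μ + 2 * T₀ := by linarith
  rw [ofReal_integral_eq_lintegral_ofReal
    ((integrable_inv_norm_sq_mul_norm_sq_add volume finrank_euclideanSpace_fin hμ).const_mul _)
    (ae_of_all _ fun p => mul_nonneg hC (by positivity))]
  refine lintegral_mono_ae <|
    (Measure.ae_ne volume 0).mono fun p hp => ENNReal.ofReal_le_ofReal ?_
  calc _ ≤ (μ + 2 * T) / (‖p‖ ^ 2 * (‖p‖ ^ 2 + μ)) := abs_inv_KT_sub_inv_mul_le hμ hT hp
    _ ≤ _ := by rw [div_eq_mul_inv]; gcongr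

/-- uniform bound on the regular part of the Birman–Schwinger kernel:
for `μ > 0` and `T₀ > 0`,
`sup_{0 < T ≤ T₀} ∫ |1/K_T(p) - 1/|p|²| · (||p| - √μ|/(|p| + √μ)) dp < ∞`. -/
theorem kernel_uniform_bound (μ T₀ : ℝ) (hμ : 0 < μ) (hT₀ : 0 < T₀) :
    ∃ C : ℝ, ∀ T : ℝ, 0 < T → T ≤ T₀ →
      (∫⁻ p : E3, ENNReal.ofReal
          (|1 / KT μ T p - 1 / ‖p‖^2| * (|‖p‖ - Real.sqrt μ| / (‖p‖ + Real.sqrt μ))))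
        ≤ ENNReal.ofReal C :=
  kernel_uniform_bound_general μ T₀ hμ

end BCS
end
end

section
/- For all real numbers x, y with 0 < x < 1, 0 < y < 1 and y ≠ 1/2, one has x·ln(x/y) + (1−x)·ln((1−x)/(1−y)) ≥ (ln((1−y)/y)/(1−2y))·(x−y)² + (4/3)·(x(1−x) − y(1−y))². -/
/-!
Put `u = 1 - 2x`, `v = 1 - 2y` and `B t = artanh t / t - t² / 3`. Since `ln((1-y)/y) = 2 artanh v`,
the gap `Φ_y(x)` = right-hand side minus left-hand side has derivative `2u (B v - B u)` in `x`.
It vanishes at `x = y` and is invariant under `x ↦ 1 - x` and `y ↦ 1 - y`, so we may take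
`x ≤ 1/2` and `y < 1/2`, where `u, v ∈ (0, 1)`. There `B` is increasing (this is the bound
`artanh t ≤ t/(1-t²) - 2t³/3`, proved by differentiating once more), so `Φ_y` decreases up to `y`
and increases after it, and its minimum is `Φ_y(y) = 0`.
-/

open Real Set Topology

theorem monotoneOn_of_hasDerivAt_nonneg_interior {D : Set ℝ} (hD : Convex ℝ D) {f f' : ℝ → ℝ}
    (hf : ∀ x ∈ D, HasDerivAt f (f' x) x) (hf'₀ : ∀ x ∈ interior D, 0 ≤ f' x) :
    MonotoneOn f D :=
  monotoneOn_of_hasDerivWithinAt_nonneg hD (fun x hx => (hf x hx).continuousAt.continuousWithinAt)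
    (fun x hx => (hf x (interior_subset hx)).hasDerivWithinAt) hf'₀

theorem antitoneOn_of_hasDerivAt_nonpos_interior {D : Set ℝ} (hD : Convex ℝ D) {f f' : ℝ → ℝ}
    (hf : ∀ x ∈ D, HasDerivAt f (f' x) x) (hf'₀ : ∀ x ∈ interior D, f' x ≤ 0) :
    AntitoneOn f D :=
  antitoneOn_of_hasDerivWithinAt_nonpos hD (fun x hx => (hf x hx).continuousAt.continuousWithinAt)
    (fun x hx => (hf x (interior_subset hx)).hasDerivWithinAt) hf'₀

theorem apply_le_apply_of_hasDerivAt_sign_change {f f' : ℝ → ℝ} {a x : ℝ}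
    (hf : ∀ z ∈ uIcc a x, HasDerivAt f (f' z) z) (hleft : ∀ z ∈ Ioo x a, f' z ≤ 0)
    (hright : ∀ z ∈ Ioo a x, 0 ≤ f' z) : f a ≤ f x := by
  rcases le_total x a with hxa | hax
  · rw [uIcc_of_ge hxa] at hf
    refine antitoneOn_of_hasDerivAt_nonpos_interior (convex_Icc x a) hf ?_ ⟨le_rfl, hxa⟩
      ⟨hxa, le_rfl⟩ hxa
    rwa [interior_Icc]
  · rw [uIcc_of_le hax] at hf
    refine monotoneOn_of_hasDerivAt_nonneg_interior (convex_Icc a x) hf ?_ ⟨le_rfl, hax⟩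
      ⟨hax, le_rfl⟩ hax
    rwa [interior_Icc]

theorem Real.hasDerivAt_mul_log_div {c x : ℝ} (hc : c ≠ 0) (hx : x ≠ 0) :
    HasDerivAt (fun x => x * log (x / c)) (log (x / c) + 1) x := by
  have := (hasDerivAt_id x).mul
    ((hasDerivAt_log (div_ne_zero hx hc)).comp x ((hasDerivAt_id x).div_const c))
  refine this.congr_deriv ?_
  simp only [id, Function.comp_apply]
  field_simp

theorem Real.hasDerivAt_artanh {t : ℝ} (ht : t ∈ Ioo (-1) 1) :
    HasDerivAt artanh (1 - t ^ 2)⁻¹ t := by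
  obtain ⟨h1, h2⟩ := ht
  have hp : 0 < 1 + t := by linarith
  have hm : 0 < 1 - t := by linarith
  have hlog : HasDerivAt (fun s => (log (1 + s) - log (1 - s)) / 2)
      (((1 + t)⁻¹ * (0 + 1) - (1 - t)⁻¹ * (0 - 1)) / 2) t :=
    (((hasDerivAt_log hp.ne').comp t ((hasDerivAt_const t 1).add (hasDerivAt_id t))).sub
      ((hasDerivAt_log hm.ne').comp t ((hasDerivAt_const t 1).sub (hasDerivAt_id t)))).div_const 2
  have heq : artanh =ᶠ[𝓝 t] fun s => (log (1 + s) - log (1 - s)) / 2 := by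
    filter_upwards [Ioo_mem_nhds h1 h2] with s ⟨hs1, hs2⟩
    rw [artanh_eq_half_log ⟨hs1.le, hs2.le⟩, log_div (by linarith) (by linarith)]
    ring
  have hq : 1 - t ^ 2 ≠ 0 := by nlinarith
  refine (hlog.congr_of_eventuallyEq heq).congr_deriv ?_
  field_simp
  ring

theorem Real.artanh_one_sub_two_mul {y : ℝ} (hy0 : 0 < y) (hy1 : y < 1) :
    artanh (1 - 2 * y) = (log (1 - y) - log y) / 2 := by
  have hquot : (1 + (1 - 2 * y)) / (1 - (1 - 2 * y)) = (1 - y) / y := by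
    field_simp
    ring
  rw [artanh_eq_half_log ⟨by linarith, by linarith⟩, hquot, log_div (by linarith) hy0.ne']
  ring

theorem Real.artanh_le_div_one_sub_sq_sub {t : ℝ} (ht0 : 0 ≤ t) (ht1 : t < 1) :
    artanh t ≤ t / (1 - t ^ 2) - 2 * t ^ 3 / 3 := by
  have hderiv : ∀ s ∈ Ico (0 : ℝ) 1,
      HasDerivAt (fun s => s / (1 - s ^ 2) - 2 * s ^ 3 / 3 - artanh s)
        (2 * s ^ 2 * (1 - (1 - s ^ 2) ^ 2) / (1 - s ^ 2) ^ 2) s := by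
    rintro s ⟨hs0, hs1⟩
    have hq : 1 - s ^ 2 ≠ 0 := by nlinarith
    have := (((hasDerivAt_id s).div ((hasDerivAt_const s 1).sub (hasDerivAt_pow 2 s)) hq).sub
      (((hasDerivAt_pow 3 s).const_mul 2).div_const 3)).sub
      (hasDerivAt_artanh ⟨by linarith, hs1⟩)
    refine this.congr_deriv ?_
    simp only [Pi.sub_apply, id]
    field_simp
    ring
  have hmono := monotoneOn_of_hasDerivAt_nonneg_interior (convex_Ico 0 1) hderiv <| by
    rw [interior_Ico]
    rintro s ⟨hs0, hs1⟩
    have : 0 < 1 - s ^ 2 := by nlinarith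
    have : (1 - s ^ 2) ^ 2 ≤ 1 := by nlinarith
    positivity
  have := hmono ⟨le_rfl, one_pos⟩ ⟨ht0, ht1⟩ ht0
  norm_num [artanh_zero] at this
  linarith

noncomputable def artanhDivSubSq (t : ℝ) : ℝ := artanh t / t - t ^ 2 / 3

theorem monotoneOn_artanhDivSubSq : MonotoneOn artanhDivSubSq (Ioo 0 1) := by
  have hderiv : ∀ t ∈ Ioo (0 : ℝ) 1, HasDerivAt artanhDivSubSq
      ((t / (1 - t ^ 2) - 2 * t ^ 3 / 3 - artanh t) / t ^ 2) t := by
    rintro t ⟨ht0, ht1⟩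
    have hq : 1 - t ^ 2 ≠ 0 := by nlinarith
    have := ((hasDerivAt_artanh ⟨by linarith, ht1⟩).div (hasDerivAt_id t) ht0.ne').sub
      ((hasDerivAt_pow 2 t).div_const 3)
    refine this.congr_deriv ?_
    simp only [id]
    field_simp
    ring
  refine monotoneOn_of_hasDerivAt_nonneg_interior (convex_Ioo 0 1) hderiv ?_
  rw [interior_Ioo]
  rintro t ⟨ht0, ht1⟩
  have := artanh_le_div_one_sub_sq_sub ht0.le ht1
  exact div_nonneg (by linarith) (sq_nonneg t)

noncomputable def binaryRelEntropyGap (y x : ℝ) : ℝ :=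
  x * log (x / y) + (1 - x) * log ((1 - x) / (1 - y))
    - log ((1 - y) / y) / (1 - 2 * y) * (x - y) ^ 2 - 4 / 3 * (x * (1 - x) - y * (1 - y)) ^ 2

theorem binaryRelEntropyGap_self (y : ℝ) : binaryRelEntropyGap y y = 0 := by
  simp [binaryRelEntropyGap]

theorem binaryRelEntropyGap_one_sub_left {x y : ℝ} (hx0 : 0 < x) (hx1 : x < 1) (hy0 : 0 < y)
    (hy1 : y < 1) (hy : y ≠ 1 / 2) :
    binaryRelEntropyGap (1 - y) x = binaryRelEntropyGap y x := by
  have hx1' : 0 < 1 - x := by linarith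
  have hy1' : 0 < 1 - y := by linarith
  have hv : 1 - y * 2 ≠ 0 := by contrapose! hy; linarith
  have hv' : 1 - (1 - y) * 2 ≠ 0 := by contrapose! hy; linarith
  simp only [binaryRelEntropyGap, sub_sub_cancel]
  rw [log_div hx0.ne' hy0.ne', log_div hx1'.ne' hy1'.ne', log_div hx0.ne' hy1'.ne',
    log_div hx1'.ne' hy0.ne', log_div hy1'.ne' hy0.ne', log_div hy0.ne' hy1'.ne']
  field_simp
  ring

theorem binaryRelEntropyGap_one_sub_right {x y : ℝ} (hx0 : 0 < x) (hx1 : x < 1) (hy0 : 0 < y)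
    (hy1 : y < 1) (hy : y ≠ 1 / 2) :
    binaryRelEntropyGap y (1 - x) = binaryRelEntropyGap y x := by
  have hx1' : 0 < 1 - x := by linarith
  have hy1' : 0 < 1 - y := by linarith
  have hv : 1 - y * 2 ≠ 0 := by contrapose! hy; linarith
  simp only [binaryRelEntropyGap, sub_sub_cancel]
  rw [log_div hx0.ne' hy0.ne', log_div hx1'.ne' hy1'.ne', log_div hx0.ne' hy1'.ne',
    log_div hx1'.ne' hy0.ne', log_div hy1'.ne' hy0.ne']
  field_simp
  ring

theorem hasDerivAt_binaryRelEntropyGap {x y : ℝ} (hx0 : 0 < x) (hx1 : x < 1) (hy0 : 0 < y)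
    (hy1 : y < 1) (hy : y ≠ 1 / 2) :
    HasDerivAt (binaryRelEntropyGap y)
      (2 * (1 - 2 * x) * (artanhDivSubSq (1 - 2 * y) - artanhDivSubSq (1 - 2 * x))) x := by
  have hx1' : 0 < 1 - x := by linarith
  have hy1' : 0 < 1 - y := by linarith
  have hent := hasDerivAt_mul_log_div hy0.ne' hx0.ne'
  have hent' := (hasDerivAt_mul_log_div hy1'.ne' hx1'.ne').comp x ((hasDerivAt_id' x).const_sub 1)
  have hquad := (((hasDerivAt_id x).sub_const y).pow 2).const_mul
    (log ((1 - y) / y) / (1 - 2 * y))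
  have hquart := ((((hasDerivAt_id x).mul ((hasDerivAt_const x (1 : ℝ)).sub
    (hasDerivAt_id x))).sub_const (y * (1 - y))).pow 2).const_mul (4 / 3 : ℝ)
  refine (((hent.add hent').sub hquad).sub hquart).congr_deriv ?_
  have hv : 1 - y * 2 ≠ 0 := by contrapose! hy; linarith
  -- `u * (artanh u / u) = artanh u` holds even at the junk point `u = 0`, as `artanh 0 = 0`
  have hu : (1 - 2 * x) * (artanh (1 - 2 * x) / (1 - 2 * x)) = artanh (1 - 2 * x) :=
    mul_div_cancel_of_imp' fun h => by rw [h, artanh_zero]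
  simp only [id, Pi.sub_apply, Pi.mul_apply, artanhDivSubSq, Nat.cast_ofNat,
    Nat.add_one_sub_one, pow_one, mul_one, one_mul]
  rw [show ∀ a b c d u : ℝ, 2 * u * (a - b - (c - d)) = 2 * u * (a - b + d) - 2 * (u * c) from
      fun _ _ _ _ _ => by ring, hu,
    log_div hx0.ne' hy0.ne', log_div hx1'.ne' hy1'.ne', log_div hy1'.ne' hy0.ne',
    artanh_one_sub_two_mul hx0 hx1, artanh_one_sub_two_mul hy0 hy1]
  field_simp
  ring

theorem binaryRelEntropyGap_nonneg_of_le_half {x y : ℝ} (hx0 : 0 < x) (hx : x ≤ 1 / 2)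
    (hy0 : 0 < y) (hy : y < 1 / 2) : 0 ≤ binaryRelEntropyGap y x := by
  have hv : 1 - 2 * y ∈ Ioo 0 1 := ⟨by linarith, by linarith⟩
  rw [← binaryRelEntropyGap_self y]
  refine apply_le_apply_of_hasDerivAt_sign_change
    (f' := fun z => 2 * (1 - 2 * z) * (artanhDivSubSq (1 - 2 * y) - artanhDivSubSq (1 - 2 * z)))
    (fun z hz => ?_) (fun z hz => ?_) fun z hz => ?_
  · have hz0 : 0 < z := lt_of_lt_of_le (lt_min hy0 hx0) hz.1
    have hz1 : z < 1 := by linarith [max_le hy.le hx |>.trans' hz.2]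
    exact hasDerivAt_binaryRelEntropyGap hz0 hz1 hy0 (by linarith) (by linarith)
  · have hu : 1 - 2 * z ∈ Ioo 0 1 := ⟨by linarith [hz.2], by linarith [hz.1]⟩
    have := monotoneOn_artanhDivSubSq hv hu (by linarith [hz.2])
    exact mul_nonpos_of_nonneg_of_nonpos (by linarith [hu.1]) (by linarith)
  · have hu : 1 - 2 * z ∈ Ioo 0 1 := ⟨by linarith [hz.2], by linarith [hz.1]⟩
    have := monotoneOn_artanhDivSubSq hu hv (by linarith [hz.1])
    exact mul_nonneg (by linarith [hu.1]) (by linarith)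

theorem binaryRelEntropyGap_nonneg {x y : ℝ} (hx0 : 0 < x) (hx1 : x < 1) (hy0 : 0 < y)
    (hy1 : y < 1) (hy : y ≠ 1 / 2) : 0 ≤ binaryRelEntropyGap y x := by
  wlog hy' : y < 1 / 2 generalizing y
  · rw [← binaryRelEntropyGap_one_sub_left hx0 hx1 hy0 hy1 hy]
    exact this (by linarith) (by linarith) (by contrapose! hy; linarith)
      (by contrapose! hy; linarith)
  wlog hx' : x ≤ 1 / 2 generalizing x
  · rw [← binaryRelEntropyGap_one_sub_right hx0 hx1 hy0 hy1 hy]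
    exact this (by linarith) (by linarith) (by linarith)
  exact binaryRelEntropyGap_nonneg_of_le_half hx0 hx' hy0 hy'

/-- scalar inequality behind Lemma 1 of FHSS: for `0 < x < 1`,
`0 < y < 1`, `y ≠ 1/2`,
`x ln(x/y) + (1-x) ln((1-x)/(1-y)) ≥ (ln((1-y)/y)/(1-2y))(x-y)² + (4/3)(x(1-x)-y(1-y))²`. -/
theorem relative_entropy_scalar_inequality
    (x y : ℝ) (hx0 : 0 < x) (hx1 : x < 1) (hy0 : 0 < y) (hy1 : y < 1) (hy : y ≠ 1/2) :
    (Real.log ((1 - y)/y) / (1 - 2*y)) * (x - y)^2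
      + (4/3) * (x*(1 - x) - y*(1 - y))^2
    ≤ x * Real.log (x/y) + (1 - x) * Real.log ((1 - x)/(1 - y)) := by
  have hgap := binaryRelEntropyGap_nonneg hx0 hx1 hy0 hy1 hy
  rw [binaryRelEntropyGap] at hgap
  linarith
end

section
/- Let n ∈ ℕ, let H be an n×n Hermitian matrix, set Γ' = (1 + e^H)^{−1}, and let Γ be an n×n Hermitian matrix all of whose eigenvalues lie in the open interval (0,1). Define g : ℝ → ℝ by g(x) = x/tanh(x/2) for x ≠ 0 and g(0) = 2. Then tr[ Γ(ln Γ − ln Γ') + (1−Γ)(ln(1−Γ) − ln(1−Γ')) ] ≥ tr[ (Γ−Γ') g(H) (Γ−Γ') ] + (4/3)·tr[ (Γ(1−Γ) − Γ'(1−Γ'))² ]. -/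
/-!
Diagonalise `Γ = ∑ γᵢ uᵢuᵢ*` and `H = ∑ βⱼ vⱼvⱼ*`. For all functions `f`, `g`,
`tr (f(Γ) g(H)) = ∑ᵢⱼ |⟨uᵢ, vⱼ⟩|² f(γᵢ) g(βⱼ)`, and each of the three traces is a combination of
such terms, hence equals `∑ᵢⱼ |⟨uᵢ, vⱼ⟩|² F(γᵢ, βⱼ)` for an explicit scalar function `F`. The
weights being nonnegative, it suffices to prove the scalar inequality for `x = γᵢ ∈ (0, 1)` and
`y = (1 + e^β)⁻¹`. With `s = 1 - 2x` and `t = 1 - 2y = tanh (β/2)` both sides are power series in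
`s`, `t`: the `k`-th term of the relative entropy exceeds the `k`-th term of the expansion
`g(β)(x - y)² = ∑ₖ t^{2k} (s - t)² / (2(2k + 1))` by
`(s^{2k+2} + k t^{2k+2} - (k + 1) s² t^{2k}) / ((2k + 1)(2k + 2)) ≥ 0` (AM–GM), and for `k = 1`
this excess is exactly `(s² - t²)² / 12 = (4/3)(x(1 - x) - y(1 - y))²`.
-/

open Matrix Real Set

theorem add_one_mul_mul_pow_le {u v : ℝ} (hu : 0 ≤ u) (hv : 0 ≤ v) (m : ℕ) :
    (m + 1) * u * v ^ m ≤ u ^ (m + 1) + m * v ^ (m + 1) := by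
  rcases hv.eq_or_lt with rfl | hv
  · cases m <;> simp [hu]
  · have hb := one_add_mul_le_pow (a := u / v - 1) (by linarith [div_nonneg hu hv.le]) (m + 1)
    rw [add_sub_cancel, div_pow, le_div_iff₀ (by positivity)] at hb
    push_cast at hb
    have : u / v * v ^ (m + 1) = u * v ^ m := by rw [pow_succ]; field_simp
    nlinarith [this]

namespace Real

noncomputable def fermiDirac (x : ℝ) : ℝ := (1 + exp x)⁻¹

noncomputable def binRelEntropy (x y : ℝ) : ℝ :=
  x * (log x - log y) + (1 - x) * (log (1 - x) - log (1 - y))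

theorem hasSum_artanh {s : ℝ} (hs : |s| < 1) :
    HasSum (fun k : ℕ => s ^ (2 * k + 1) / (2 * k + 1)) (artanh s) := by
  obtain ⟨hs₁, hs₂⟩ := abs_lt.mp hs
  rw [artanh_eq_half_log ⟨hs₁.le, hs₂.le⟩, log_div (by linarith) (by linarith)]
  refine ((hasSum_log_sub_log_of_abs_lt_one hs).mul_left (1 / 2)).congr_fun fun k => ?_
  field_simp

theorem artanh_one_sub_two_mul_s10 {x : ℝ} (hx : x ∈ Ioo 0 1) :
    artanh (1 - 2 * x) = (log (1 - x) - log x) / 2 := by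
  obtain ⟨hx₀, hx₁⟩ := hx
  rw [artanh_eq_half_log ⟨by linarith, by linarith⟩,
    show (1 + (1 - 2 * x)) / (1 - (1 - 2 * x)) = (1 - x) / x by field_simp; ring,
    log_div (by linarith) hx₀.ne']
  ring

theorem log_one_sub_sq_one_sub_two_mul {x : ℝ} (hx : x ∈ Ioo 0 1) :
    log (1 - (1 - 2 * x) ^ 2) = log 4 + log x + log (1 - x) := by
  obtain ⟨hx₀, hx₁⟩ := hx
  rw [show 1 - (1 - 2 * x) ^ 2 = 4 * x * (1 - x) by ring,
    log_mul (by positivity) (by linarith), log_mul (by norm_num) hx₀.ne']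

theorem binRelEntropy_eq_artanh {x y : ℝ} (hx : x ∈ Ioo 0 1) (hy : y ∈ Ioo 0 1) :
    binRelEntropy x y =
      (1 - 2 * x) * artanh (1 - 2 * x) - (1 - 2 * x) * artanh (1 - 2 * y)
        + log (1 - (1 - 2 * x) ^ 2) / 2 - log (1 - (1 - 2 * y) ^ 2) / 2 := by
  rw [binRelEntropy, artanh_one_sub_two_mul_s10 hx, artanh_one_sub_two_mul_s10 hy,
    log_one_sub_sq_one_sub_two_mul hx, log_one_sub_sq_one_sub_two_mul hy]
  ring

theorem sq_sub_add_sq_sub_sq_le_mul_artanh_sub {s t m : ℝ} (hs : |s| < 1) (ht : |t| < 1)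
    (hm : HasSum (fun k : ℕ => t ^ (2 * k) / (2 * k + 1)) m) :
    m * (s - t) ^ 2 / 2 + (s ^ 2 - t ^ 2) ^ 2 / 12 ≤
      s * artanh s - s * artanh t + log (1 - s ^ 2) / 2 - log (1 - t ^ 2) / 2 := by
  have hlog (u : ℝ) (hu : |u| < 1) :
      HasSum (fun k : ℕ => (u ^ 2) ^ (k + 1) / (k + 1) / 2) (-log (1 - u ^ 2) / 2) :=
    (hasSum_pow_div_log_of_abs_lt_one (by rw [abs_pow]; nlinarith [abs_nonneg u])).div_const 2
  have hexcess := (((((hasSum_artanh hs).mul_left s).sub ((hasSum_artanh ht).mul_left s)).sub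
    (hlog s hs)).add (hlog t ht)).sub (hm.mul_right ((s - t) ^ 2 / 2))
  set R : ℕ → ℝ := fun k => s * (s ^ (2 * k + 1) / (2 * k + 1)) - s * (t ^ (2 * k + 1) / (2 * k + 1))
    - (s ^ 2) ^ (k + 1) / (k + 1) / 2 + (t ^ 2) ^ (k + 1) / (k + 1) / 2
    - t ^ (2 * k) / (2 * k + 1) * ((s - t) ^ 2 / 2) with hR
  have hR_eq (k : ℕ) : R k =
      ((s ^ 2) ^ (k + 1) + k * (t ^ 2) ^ (k + 1) - (k + 1) * s ^ 2 * (t ^ 2) ^ k)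
        / ((2 * k + 1) * (2 * k + 2)) := by
    rw [hR]
    field_simp
    ring
  have hR_nonneg (k : ℕ) : 0 ≤ R k := by
    rw [hR_eq]
    exact div_nonneg (sub_nonneg.mpr (add_one_mul_mul_pow_le (sq_nonneg s) (sq_nonneg t) k))
      (by positivity)
  have hR_one : R 1 = (s ^ 2 - t ^ 2) ^ 2 / 12 := by
    rw [hR_eq]
    ring
  have := le_hasSum hexcess 1 fun k _ => hR_nonneg k
  rw [hR_one] at this
  linarith

theorem sq_add_sq_le_binRelEntropy {x y m : ℝ} (hx : x ∈ Ioo 0 1) (hy : y ∈ Ioo 0 1)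
    (hm : HasSum (fun k : ℕ => (1 - 2 * y) ^ (2 * k) / (2 * k + 1)) m) :
    2 * m * (x - y) ^ 2 + 4 / 3 * (x * (1 - x) - y * (1 - y)) ^ 2 ≤ binRelEntropy x y := by
  have hs : |1 - 2 * x| < 1 := abs_lt.mpr ⟨by linarith [hx.2], by linarith [hx.1]⟩
  have ht : |1 - 2 * y| < 1 := abs_lt.mpr ⟨by linarith [hy.2], by linarith [hy.1]⟩
  rw [binRelEntropy_eq_artanh hx hy]
  convert sq_sub_add_sq_sub_sq_le_mul_artanh_sub hs ht hm using 1
  ring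

theorem fermiDirac_eq_tanh (a : ℝ) : fermiDirac a = (1 - tanh (a / 2)) / 2 := by
  have h : exp a = exp (a / 2) * exp (a / 2) := by rw [← exp_add, add_halves]
  rw [fermiDirac, tanh_eq, exp_neg, h]
  field_simp
  ring

theorem hasSum_tanh_half_pow_div (a : ℝ) :
    HasSum (fun k : ℕ => tanh (a / 2) ^ (2 * k) / (2 * k + 1))
      ((if a = 0 then 2 else a / tanh (a / 2)) / 2) := by
  rcases eq_or_ne a 0 with rfl | ha
  · convert hasSum_single (f := fun k : ℕ => (0 : ℝ) ^ (2 * k) / (2 * k + 1)) 0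
      (fun k hk => by simp [hk]) using 1 <;> simp
  · have ht : tanh (a / 2) ≠ 0 := fun h => ha (by
      simpa using tanh_injective (h.trans tanh_zero.symm))
    have h := (hasSum_artanh (abs_tanh_lt_one (a / 2))).div_const (tanh (a / 2))
    rw [artanh_tanh] at h
    rw [if_neg ha, div_right_comm]
    refine h.congr_fun fun k => ?_
    rw [pow_succ]
    field_simp

theorem sq_add_sq_le_binRelEntropy_fermiDirac {x : ℝ} (hx : x ∈ Ioo 0 1) (a : ℝ) :
    (if a = 0 then 2 else a / tanh (a / 2)) * (x - fermiDirac a) ^ 2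
        + 4 / 3 * (x * (1 - x) - fermiDirac a * (1 - fermiDirac a)) ^ 2
      ≤ binRelEntropy x (fermiDirac a) := by
  have ht : 1 - 2 * fermiDirac a = tanh (a / 2) := by
    rw [fermiDirac_eq_tanh]
    ring
  have hy : fermiDirac a ∈ Ioo 0 1 := by
    rw [fermiDirac_eq_tanh]
    exact ⟨by linarith [tanh_lt_one (a / 2)], by linarith [neg_one_lt_tanh (a / 2)]⟩
  have hm : HasSum (fun k : ℕ => (1 - 2 * fermiDirac a) ^ (2 * k) / (2 * k + 1))
      ((if a = 0 then 2 else a / tanh (a / 2)) / 2) := by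
    rw [ht]
    exact hasSum_tanh_half_pow_div a
  convert sq_add_sq_le_binRelEntropy hx hy hm using 2
  ring

end Real

section

variable {𝕜 : Type*} [RCLike 𝕜] {n : Type*} [Fintype n] [DecidableEq n] {A B : Matrix n n 𝕜}

theorem Matrix.trace_diagonal_mul_conj_diagonal (W : Matrix n n 𝕜) (d e : n → 𝕜) :
    trace (diagonal d * (W * diagonal e * star W)) =
      ∑ i, ∑ j, d i * e j * (‖W i j‖ ^ 2 : ℝ) := by
  simp only [trace, diag_apply, diagonal_mul]
  simp only [mul_apply, ↓mul_diagonal, star_apply, Finset.mul_sum]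
  refine Finset.sum_congr rfl fun i _ => Finset.sum_congr rfl fun j _ => ?_
  rw [RCLike.ofReal_pow, ← RCLike.mul_conj, RCLike.star_def]
  ring

@[fun_prop]
theorem Matrix.continuousOn_spectrum_real (f : ℝ → ℝ) (A : Matrix n n 𝕜) :
    ContinuousOn f (spectrum ℝ A) :=
  A.finite_real_spectrum.continuousOn f

@[fun_prop]
theorem Matrix.continuousOn_image_spectrum_real (f g : ℝ → ℝ) (A : Matrix n n 𝕜) :
    ContinuousOn g (f '' spectrum ℝ A) :=
  (A.finite_real_spectrum.image f).continuousOn g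

theorem Matrix.IsHermitian.cfc_one_sub (hA : A.IsHermitian) (f : ℝ → ℝ) :
    cfc (fun x => 1 - f x) A = 1 - cfc f A := by
  rw [cfc_sub (fun _ => (1 : ℝ)) f A, cfc_const_one ℝ A hA.isSelfAdjoint]

namespace Matrix.IsHermitian

variable (hA : A.IsHermitian) (hB : B.IsHermitian)

/-- `|⟨uᵢ, vⱼ⟩|²` for the eigenvectors `uᵢ` of `A` and `vⱼ` of `B`. -/
noncomputable def overlap (i j : n) : ℝ :=
  ‖(star (hA.eigenvectorUnitary : Matrix n n 𝕜) * hB.eigenvectorUnitary) i j‖ ^ 2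

noncomputable def jointSum (F : ℝ → ℝ → ℝ) : ℝ :=
  ∑ i, ∑ j, hA.overlap hB i j * F (hA.eigenvalues i) (hB.eigenvalues j)

theorem jointSum_add (F G : ℝ → ℝ → ℝ) :
    hA.jointSum hB F + hA.jointSum hB G = hA.jointSum hB fun x y => F x y + G x y := by
  simp only [jointSum, ← Finset.sum_add_distrib, mul_add]

theorem jointSum_sub (F G : ℝ → ℝ → ℝ) :
    hA.jointSum hB F - hA.jointSum hB G = hA.jointSum hB fun x y => F x y - G x y := by
  simp only [jointSum, ← Finset.sum_sub_distrib, mul_sub]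

theorem mul_jointSum (c : ℝ) (F : ℝ → ℝ → ℝ) :
    c * hA.jointSum hB F = hA.jointSum hB fun x y => c * F x y := by
  simp only [jointSum, Finset.mul_sum, mul_left_comm c]

theorem jointSum_le_jointSum {F G : ℝ → ℝ → ℝ}
    (h : ∀ i j, F (hA.eigenvalues i) (hB.eigenvalues j) ≤ G (hA.eigenvalues i) (hB.eigenvalues j)) :
    hA.jointSum hB F ≤ hA.jointSum hB G :=
  Finset.sum_le_sum fun i _ => Finset.sum_le_sum fun j _ =>
    mul_le_mul_of_nonneg_left (h i j) (by unfold overlap; positivity)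

theorem trace_cfc_mul_cfc (f g : ℝ → ℝ) :
    trace (cfc f A * cfc g B) = (hA.jointSum hB fun x y => f x * g y : 𝕜) := by
  have hcyc : trace (cfc f A * cfc g B) =
      trace (diagonal (RCLike.ofReal ∘ f ∘ hA.eigenvalues) *
        (star (hA.eigenvectorUnitary : Matrix n n 𝕜) * (hB.eigenvectorUnitary : Matrix n n 𝕜) *
          diagonal (RCLike.ofReal ∘ g ∘ hB.eigenvalues) *
          star (star (hA.eigenvectorUnitary : Matrix n n 𝕜) *
            (hB.eigenvectorUnitary : Matrix n n 𝕜)))) := by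
    rw [hA.cfc_eq, hB.cfc_eq, IsHermitian.cfc, IsHermitian.cfc, Unitary.conjStarAlgAut_apply,
      Unitary.conjStarAlgAut_apply, Matrix.mul_assoc, Matrix.mul_assoc, trace_mul_comm]
    simp only [star_mul, star_star, Matrix.mul_assoc]
  rw [hcyc, trace_diagonal_mul_conj_diagonal, jointSum, RCLike.ofReal_sum]
  refine Finset.sum_congr rfl fun i _ => ?_
  rw [RCLike.ofReal_sum]
  refine Finset.sum_congr rfl fun j _ => ?_
  simp only [overlap, Function.comp_apply]
  push_cast
  ring

theorem trace_cfc_left (f : ℝ → ℝ) : trace (cfc f A) = (hA.jointSum hB fun x _ => f x : 𝕜) := by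
  simpa [cfc_one ℝ B hB.isSelfAdjoint] using hA.trace_cfc_mul_cfc hB f 1

theorem trace_cfc_right (g : ℝ → ℝ) : trace (cfc g B) = (hA.jointSum hB fun _ y => g y : 𝕜) := by
  simpa [cfc_one ℝ A hA.isSelfAdjoint] using hA.trace_cfc_mul_cfc hB 1 g

theorem trace_sub_mul_cfc_mul_sub (f g h : ℝ → ℝ) :
    trace ((cfc f A - cfc g B) * cfc h B * (cfc f A - cfc g B)) =
      (hA.jointSum hB fun x y => h y * (f x - g y) ^ 2 : 𝕜) := by
  have hexp : (cfc f A - cfc g B) * cfc h B * (cfc f A - cfc g B) =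
      cfc f A * cfc h B * cfc f A - cfc f A * cfc h B * cfc g B - cfc g B * cfc h B * cfc f A
        + cfc g B * cfc h B * cfc g B := by
    noncomm_ring
  rw [hexp, trace_add, trace_sub, trace_sub, trace_mul_cycle (cfc f A), trace_mul_cycle (cfc g B),
    Matrix.mul_assoc (cfc f A) (cfc h B), Matrix.mul_assoc (cfc f A) (cfc g B), ← cfc_mul f f A,
    ← cfc_mul h g B, ← cfc_mul g h B, ← cfc_mul (fun y => g y * h y) g B,
    hA.trace_cfc_mul_cfc hB, hA.trace_cfc_mul_cfc hB, hA.trace_cfc_mul_cfc hB,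
    hA.trace_cfc_right hB, ← RCLike.ofReal_sub, ← RCLike.ofReal_sub, ← RCLike.ofReal_add,
    jointSum_sub, jointSum_sub, jointSum_add]
  congr 2
  ext x y
  ring

theorem trace_sub_sq (f g : ℝ → ℝ) :
    trace ((cfc f A - cfc g B) ^ 2) = (hA.jointSum hB fun x y => (f x - g y) ^ 2 : 𝕜) := by
  simpa [sq, cfc_one ℝ B hB.isSelfAdjoint] using hA.trace_sub_mul_cfc_mul_sub hB f g 1

theorem trace_cfc_mul_sub (f g h : ℝ → ℝ) :
    trace (cfc f A * (cfc g A - cfc h B)) = (hA.jointSum hB fun x y => f x * (g x - h y) : 𝕜) := by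
  rw [mul_sub, trace_sub, ← cfc_mul f g A, hA.trace_cfc_left hB, hA.trace_cfc_mul_cfc hB,
    ← RCLike.ofReal_sub, jointSum_sub]
  simp only [mul_sub]

end Matrix.IsHermitian

end

/-- matrix relative entropy estimate, Lemma 1 of FHSS:
for Hermitian `H`, `Γ' = (1+e^H)⁻¹`, and Hermitian `Γ` with all eigenvalues in `(0,1)`,
`tr[Γ(ln Γ - ln Γ') + (1-Γ)(ln(1-Γ) - ln(1-Γ'))]
  ≥ tr[(Γ-Γ') g(H) (Γ-Γ')] + (4/3) tr[(Γ(1-Γ) - Γ'(1-Γ'))²]`,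
where `g(x) = x/tanh(x/2)` (with `g(0) = 2`).  Functions of Hermitian matrices are
taken in the sense of the continuous functional calculus `cfc` (which coincides with
applying the function to the eigenvalues in a spectral decomposition), and since all
traces involved are real we compare their real parts. -/
theorem matrix_relative_entropy_inequality
    {n : ℕ} (H Γ : Matrix (Fin n) (Fin n) ℂ)
    (hH : H.IsHermitian) (hΓ : Γ.IsHermitian)
    (hΓ01 : ∀ i, hΓ.eigenvalues i ∈ Set.Ioo (0 : ℝ) 1)
    (Γ' : Matrix (Fin n) (Fin n) ℂ)
    (hΓ'def : Γ' = ((1 : Matrix (Fin n) (Fin n) ℂ) + cfc Real.exp H)⁻¹) :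
    (Matrix.trace ((Γ - Γ') * cfc (fun x : ℝ => if x = 0 then 2 else x / Real.tanh (x/2)) H
        * (Γ - Γ'))).re
      + (4/3) * (Matrix.trace ((Γ * (1 - Γ) - Γ' * (1 - Γ'))^2)).re
    ≤ (Matrix.trace (Γ * (cfc Real.log Γ - cfc Real.log Γ')
        + (1 - Γ) * (cfc Real.log (1 - Γ) - cfc Real.log (1 - Γ')))).re := by
  set g : ℝ → ℝ := fun x => if x = 0 then 2 else x / tanh (x / 2)
  have hΓ' : cfc fermiDirac H = Γ' := by
    rw [hΓ'def, nonsing_inv_eq_ringInverse, show fermiDirac = fun x => (1 + exp x)⁻¹ from rfl,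
      cfc_inv (fun x => 1 + exp x) H fun x _ => by positivity,
      cfc_const_add (1 : ℝ) exp H (ha := hH.isSelfAdjoint), map_one]
  have hΓid : cfc (fun x : ℝ => x) Γ = Γ := cfc_id' ℝ Γ hΓ.isSelfAdjoint
  have hΓ1 : cfc (fun x : ℝ => 1 - x) Γ = 1 - Γ := by rw [hΓ.cfc_one_sub, hΓid]
  have hΓ'1 : cfc (fun y => 1 - fermiDirac y) H = 1 - Γ' := by rw [hH.cfc_one_sub, hΓ']
  have hT1 := hΓ.trace_sub_mul_cfc_mul_sub hH (fun x => x) fermiDirac g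
  have hT2 := hΓ.trace_sub_sq hH (fun x => x * (1 - x)) fun y => fermiDirac y * (1 - fermiDirac y)
  have hT3 := hΓ.trace_cfc_mul_sub hH (fun x => x) log fun y => log (fermiDirac y)
  have hT4 := hΓ.trace_cfc_mul_sub hH (fun x => 1 - x) (fun x => log (1 - x))
    fun y => log (1 - fermiDirac y)
  rw [hΓid, hΓ'] at hT1
  rw [cfc_mul (fun x : ℝ => x) (fun x => 1 - x) Γ, cfc_mul fermiDirac (fun y => 1 - fermiDirac y) H,
    hΓid, hΓ1, hΓ', hΓ'1] at hT2
  rw [cfc_comp' log fermiDirac H, hΓid, hΓ'] at hT3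
  rw [cfc_comp' log (fun x : ℝ => 1 - x) Γ, cfc_comp' log (fun y => 1 - fermiDirac y) H, hΓ1,
    hΓ'1] at hT4
  rw [trace_add, hT1, hT2, hT3, hT4, ← RCLike.ofReal_add]
  simp only [← RCLike.re_to_complex, RCLike.ofReal_re]
  rw [hΓ.mul_jointSum hH, hΓ.jointSum_add hH, hΓ.jointSum_add hH]
  exact hΓ.jointSum_le_jointSum hH fun i j => sq_add_sq_le_binRelEntropy_fermiDirac (hΓ01 i) _
end

section
/- Let n, k ∈ ℕ, let A and B be n×n Hermitian matrices, and let f₁,…,f_k, g₁,…,g_k : ℝ → ℝ be functions such that ∑_{i=1}^{k} f_i(x) g_i(y) ≥ 0 for all x, y ∈ ℝ. Then ∑_{i=1}^{k} tr( f_i(A) g_i(B) ) ≥ 0. -/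
/-!
Diagonalize `A = U diag(λ) Uᴴ` and `B = V diag(μ) Vᴴ`. Then
`tr (f A * g B) = ∑ a b, f (λ a) * g (μ b) * ‖(Uᴴ V) a b‖²`, so the trace sum in question is
`∑ a b, (∑ i, fᵢ (λ a) * gᵢ (μ b)) * ‖(Uᴴ V) a b‖²`, a sum of nonnegative terms.
-/

open scoped Matrix

namespace Matrix

variable {ι 𝕜 : Type*} [RCLike 𝕜] [Fintype ι] [DecidableEq ι]

theorem trace_conj_diagonal_mul_conj_diagonal (U V : Matrix ι ι 𝕜) (d e : ι → 𝕜) :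
    trace (U * diagonal d * Uᴴ * (V * diagonal e * Vᴴ)) =
      ∑ a, ∑ b, d a * e b * (‖(Uᴴ * V) a b‖ ^ 2 : 𝕜) := by
  have hcyc : trace (U * diagonal d * Uᴴ * (V * diagonal e * Vᴴ)) =
      trace (diagonal d * (Uᴴ * V) * diagonal e * (Uᴴ * V)ᴴ) := by
    simp only [conjTranspose_mul, conjTranspose_conjTranspose, mul_assoc]
    rw [trace_mul_comm]
    simp only [mul_assoc]
  have hentry : ∀ a b, (diagonal d * (Uᴴ * V) * diagonal e) a b = d a * (Uᴴ * V) a b * e b := by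
    simp
  rw [hcyc]
  simp only [trace, diag, mul_apply (M := _ * diagonal e), hentry, conjTranspose_apply,
    ← RCLike.mul_conj]
  refine Finset.sum_congr rfl fun a _ => Finset.sum_congr rfl fun b _ => ?_
  simp only [RCLike.star_def]
  ring

namespace IsHermitian

/-- The weight `‖⟨uₐ, v_b⟩‖²` coupling the `a`-th eigenvector of `A` with the `b`-th of `B`. -/
noncomputable def eigenvectorOverlap {A B : Matrix ι ι 𝕜} (hA : A.IsHermitian) (hB : B.IsHermitian)
    (a b : ι) : ℝ :=
  ‖((hA.eigenvectorUnitary : Matrix ι ι 𝕜)ᴴ * hB.eigenvectorUnitary) a b‖ ^ 2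

theorem trace_cfc_mul_cfc_s11 {A B : Matrix ι ι 𝕜} (hA : A.IsHermitian) (hB : B.IsHermitian)
    (f g : ℝ → ℝ) :
    trace (cfc f A * cfc g B) =
      ((∑ a, ∑ b, f (hA.eigenvalues a) * g (hB.eigenvalues b) *
        hA.eigenvectorOverlap hB a b : ℝ) : 𝕜) := by
  rw [hA.cfc_eq, hB.cfc_eq, IsHermitian.cfc, IsHermitian.cfc, Unitary.conjStarAlgAut_apply,
    Unitary.conjStarAlgAut_apply, star_eq_conjTranspose, star_eq_conjTranspose,
    trace_conj_diagonal_mul_conj_diagonal]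
  simp [eigenvectorOverlap]

end IsHermitian

end Matrix

/-- Klein's inequality for Hermitian matrices: if `A, B` are
Hermitian `n×n` matrices and `f₁,…,f_k, g₁,…,g_k : ℝ → ℝ` satisfy
`∑ᵢ fᵢ(x)gᵢ(y) ≥ 0` for all `x, y ∈ ℝ`, then `∑ᵢ tr(fᵢ(A) gᵢ(B)) ≥ 0`.
Functions of Hermitian matrices are taken in the sense of the continuous functional
calculus `cfc` (which coincides with applying the function to the eigenvalues in a
spectral decomposition); the trace sum is real, so we state the bound for its
real part. -/
theorem klein_inequality
    {n k : ℕ} (A B : Matrix (Fin n) (Fin n) ℂ)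
    (hA : A.IsHermitian) (hB : B.IsHermitian)
    (f g : Fin k → ℝ → ℝ)
    (hfg : ∀ x y : ℝ, 0 ≤ ∑ i : Fin k, f i x * g i y) :
    0 ≤ (∑ i : Fin k, Matrix.trace (cfc (f i) A * cfc (g i) B)).re := by
  have hsum : ∑ i : Fin k, Matrix.trace (cfc (f i) A * cfc (g i) B) =
      ((∑ a, ∑ b, (∑ i, f i (hA.eigenvalues a) * g i (hB.eigenvalues b)) *
        hA.eigenvectorOverlap hB a b : ℝ) : ℂ) := by
    rw [Finset.sum_congr rfl fun i _ => hA.trace_cfc_mul_cfc_s11 hB _ _, ← RCLike.ofReal_sum]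
    congr 1
    simp only [Finset.sum_mul]
    rw [Finset.sum_comm]
    exact Finset.sum_congr rfl fun a _ => Finset.sum_comm
  rw [hsum, Complex.ofReal_re]
  exact Finset.sum_nonneg fun a _ => Finset.sum_nonneg fun b _ =>
    mul_nonneg (hfg _ _) (sq_nonneg _)
end

section
/- Let A and B be n×n Hermitian matrices with 0 ≤ A ≤ 1 and 0 ≤ B ≤ 1 (in the sense of operator order). Then ‖A(1−A) − B(1−B)‖_F ≤ ‖A − B‖_F, where ‖·‖_F denotes the Frobenius (Hilbert–Schmidt) norm. -/
/-!
Put `T = 1 - A - B` and `D = A - B`. Then `2 (A(1 - A) - B(1 - B)) = DT + TD`, and `0 ≤ A, B ≤ 1`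
gives `-1 ≤ T ≤ 1`. In an orthonormal eigenbasis of `T` the map `D ↦ DT + TD` multiplies the
`(i, j)` entry by `λᵢ + λⱼ`, which has modulus at most `2`; since the Frobenius norm is unitarily
invariant and monotone in the moduli of the entries, `‖DT + TD‖_F ≤ 2 ‖D‖_F`.
-/

open scoped ComplexOrder

noncomputable section

/-- The Frobenius (Hilbert–Schmidt) norm of a complex matrix, `‖M‖_F = √(tr(M*M))`. -/
def frobeniusNorm {n : ℕ} (M : Matrix (Fin n) (Fin n) ℂ) : ℝ :=
  Real.sqrt (Matrix.trace (M.conjTranspose * M)).re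

open scoped MatrixOrder
open Matrix

attribute [local instance] Matrix.frobeniusSeminormedAddCommGroup Matrix.frobeniusNormedSpace

namespace Matrix

variable {α 𝕜 m n : Type*} [Fintype m] [Fintype n]

theorem frobenius_norm_sq [SeminormedAddCommGroup α] (A : Matrix m n α) :
    ‖A‖ ^ 2 = ∑ i, ∑ j, ‖A i j‖ ^ 2 := by
  rw [frobenius_norm_def, ← Real.sqrt_eq_rpow, Real.sq_sqrt (by positivity)]
  simp only [Real.rpow_two]

theorem frobenius_norm_le_of_norm_apply_le [SeminormedAddCommGroup α] {A B : Matrix m n α}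
    {c : ℝ} (hc : 0 ≤ c) (h : ∀ i j, ‖A i j‖ ≤ c * ‖B i j‖) : ‖A‖ ≤ c * ‖B‖ := by
  rw [← sq_le_sq₀ (norm_nonneg _) (by positivity), mul_pow, frobenius_norm_sq,
    frobenius_norm_sq, Finset.mul_sum]
  refine Finset.sum_le_sum fun i _ ↦ ?_
  rw [Finset.mul_sum]
  refine Finset.sum_le_sum fun j _ ↦ ?_
  rw [← mul_pow]
  exact pow_le_pow_left₀ (norm_nonneg _) (h i j) 2

theorem frobenius_norm_mul_diagonal_add_diagonal_mul_le [SeminormedRing α] [DecidableEq n]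
    (M : Matrix n n α) {d : n → α} (hd : ∀ i, ‖d i‖ ≤ 1) :
    ‖M * diagonal d + diagonal d * M‖ ≤ 2 * ‖M‖ := by
  refine frobenius_norm_le_of_norm_apply_le zero_le_two fun i j ↦ ?_
  rw [add_apply, mul_diagonal, diagonal_mul]
  calc ‖M i j * d j + d i * M i j‖ ≤ ‖M i j‖ * ‖d j‖ + ‖d i‖ * ‖M i j‖ :=
        (norm_add_le _ _).trans (add_le_add (norm_mul_le _ _) (norm_mul_le _ _))
    _ ≤ ‖M i j‖ * 1 + 1 * ‖M i j‖ := by gcongr <;> exact hd _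
    _ = 2 * ‖M i j‖ := by ring

variable [RCLike 𝕜]

theorem frobenius_norm_sq_eq_re_trace (A : Matrix m n 𝕜) :
    ‖A‖ ^ 2 = RCLike.re (Aᴴ * A).trace := by
  simp only [frobenius_norm_sq, trace, diag, mul_apply, conjTranspose_apply, RCLike.star_def,
    RCLike.conj_mul, map_sum, ← RCLike.ofReal_pow, RCLike.ofReal_re]
  exact Finset.sum_comm

theorem frobenius_norm_unitary_mul [DecidableEq m] {U : Matrix m m 𝕜}
    (hU : U ∈ unitaryGroup m 𝕜) (A : Matrix m n 𝕜) : ‖U * A‖ = ‖A‖ := by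
  rw [← sq_eq_sq₀ (norm_nonneg _) (norm_nonneg _), frobenius_norm_sq_eq_re_trace,
    frobenius_norm_sq_eq_re_trace, conjTranspose_mul, Matrix.mul_assoc,
    ← Matrix.mul_assoc Uᴴ, ← star_eq_conjTranspose, (mem_unitaryGroup_iff'.mp hU),
    Matrix.one_mul]

theorem frobenius_norm_mul_unitary [DecidableEq n] {U : Matrix n n 𝕜}
    (hU : U ∈ unitaryGroup n 𝕜) (A : Matrix m n 𝕜) : ‖A * U‖ = ‖A‖ := by
  rw [← frobenius_norm_conjTranspose, conjTranspose_mul, ← star_eq_conjTranspose U,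
    frobenius_norm_unitary_mul (Unitary.star_mem hU), frobenius_norm_conjTranspose]

theorem IsHermitian.abs_eigenvalues_le_one [DecidableEq n] {T : Matrix n n 𝕜}
    (hT : T.IsHermitian) (hT₁ : -1 ≤ T) (hT₂ : T ≤ 1) (i : n) : |hT.eigenvalues i| ≤ 1 := by
  have hspec := hT.eigenvalues_mem_spectrum_real i
  rw [← map_one (algebraMap ℝ (Matrix n n 𝕜)), ← map_neg,
    algebraMap_le_iff_le_spectrum (R := ℝ) hT.isSelfAdjoint] at hT₁
  rw [CFC.le_one_iff (R := ℝ) T hT.isSelfAdjoint] at hT₂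
  exact abs_le.mpr ⟨hT₁ _ hspec, hT₂ _ hspec⟩

theorem frobenius_norm_mul_add_mul_le [DecidableEq n] {T : Matrix n n 𝕜} (hT : T.IsHermitian)
    (hT₁ : -1 ≤ T) (hT₂ : T ≤ 1) (D : Matrix n n 𝕜) :
    ‖D * T + T * D‖ ≤ 2 * ‖D‖ := by
  set U : Matrix n n 𝕜 := ↑hT.eigenvectorUnitary
  set Λ : Matrix n n 𝕜 := diagonal (RCLike.ofReal ∘ hT.eigenvalues)
  have hU : U ∈ unitaryGroup n 𝕜 := hT.eigenvectorUnitary.2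
  have hT_eq : T = U * Λ * star U := by
    conv_lhs => rw [hT.spectral_theorem]
    rfl
  have hconj : D * T + T * D = U * ((star U * D * U) * Λ + Λ * (star U * D * U)) * star U := by
    have hUU : U * star U = 1 := mem_unitaryGroup_iff.mp hU
    have hUU_left (X : Matrix n n 𝕜) : U * (star U * X) = X := by
      rw [← Matrix.mul_assoc, hUU, Matrix.one_mul]
    rw [hT_eq]
    simp only [Matrix.mul_add, Matrix.add_mul, Matrix.mul_assoc, hUU, hUU_left, Matrix.mul_one]
  have hΛ : ∀ i, ‖(RCLike.ofReal ∘ hT.eigenvalues) i‖ ≤ 1 := fun i ↦ by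
    rw [Function.comp_apply, RCLike.norm_ofReal (K := 𝕜)]
    exact hT.abs_eigenvalues_le_one hT₁ hT₂ i
  calc ‖D * T + T * D‖ = ‖(star U * D * U) * Λ + Λ * (star U * D * U)‖ := by
        rw [hconj, frobenius_norm_mul_unitary (Unitary.star_mem hU), frobenius_norm_unitary_mul hU]
    _ ≤ 2 * ‖star U * D * U‖ := frobenius_norm_mul_diagonal_add_diagonal_mul_le _ hΛ
    _ = 2 * ‖D‖ := by
        rw [frobenius_norm_mul_unitary hU, frobenius_norm_unitary_mul (Unitary.star_mem hU)]

end Matrix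

theorem frobeniusNorm_eq_norm {n : ℕ} (M : Matrix (Fin n) (Fin n) ℂ) :
    frobeniusNorm M = ‖M‖ := by
  rw [frobeniusNorm, ← RCLike.re_to_complex, ← frobenius_norm_sq_eq_re_trace,
    Real.sqrt_sq (norm_nonneg _)]

/-- for Hermitian matrices `0 ≤ A ≤ 1` and `0 ≤ B ≤ 1`,
`‖A(1-A) - B(1-B)‖_F ≤ ‖A - B‖_F`. -/
theorem frobenius_contraction
    {n : ℕ} (A B : Matrix (Fin n) (Fin n) ℂ)
    (hA0 : A.PosSemidef) (hA1 : ((1 : Matrix (Fin n) (Fin n) ℂ) - A).PosSemidef)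
    (hB0 : B.PosSemidef) (hB1 : ((1 : Matrix (Fin n) (Fin n) ℂ) - B).PosSemidef) :
    frobeniusNorm (A * (1 - A) - B * (1 - B)) ≤ frobeniusNorm (A - B) := by
  set T : Matrix (Fin n) (Fin n) ℂ := 1 - A - B
  have hT : T.IsHermitian := hA1.isHermitian.sub hB0.isHermitian
  have hT₁ : -1 ≤ T := le_iff.mpr <| by
    rw [show T - -1 = (1 - A) + (1 - B) by simp only [T]; abel]
    exact hA1.add hB1
  have hT₂ : T ≤ 1 := le_iff.mpr <| by
    rw [show 1 - T = A + B by simp only [T]; abel]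
    exact hA0.add hB0
  have hJordan : (A * (1 - A) - B * (1 - B)) + (A * (1 - A) - B * (1 - B)) =
      (A - B) * T + T * (A - B) := by
    simp only [T]
    noncomm_ring
  have hX := frobenius_norm_mul_add_mul_le hT hT₁ hT₂ (A - B)
  rw [← hJordan, ← two_smul ℝ, norm_smul, Real.norm_two] at hX
  rw [frobeniusNorm_eq_norm, frobeniusNorm_eq_norm]
  linarith
end
end
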